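/- arXiv:2208.05287 — 2 statements merged into one kernel-verified Lean document; each statement's English description precedes it below -/
import Mathlib

section
/- (Theorem 5, GraD with momentum in averaged form.) Assume each f_i is convex and L-smooth (L > 0), x* is a minimizer of f with ∇f_i(x*) = 0 for all i (overparameterization), and γmin > 0 satisfies γmin·‖ḡ_s(x)‖² ≤ (1/n)·∑_j ‖∇f_{s(j)}(x)‖² for every x ∈ E and every minibatch s. Set η = 1/(2L). Fix x^1 ∈ E, set z^0 = x^1, and for each sequence of minibatches (s^1, s^2, …) define for k ≥ 1: z^k = z^{k−1} − 2·η·γmin·ḡ_{s^k}(x^k) and x^{k+1} = (k/(k+1))·x^k + (1/(k+1))·z^k. (This scheme is equivalent to stochastic gradient descent with GraD scaling γmin and Polyak momentum β^k = (k−1)/(k+1).) Then for every K ≥ 1, the average over all sequences of minibatches of f(x^K) − f(x*) is at most L·‖x^1 − x*‖²/(2·γmin·K). -/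
open scoped BigOperators RealInnerProductSpace

section analysisAux
variable {d : ℕ}

lemma lineHasDerivAt (h : EuclideanSpace ℝ (Fin d) → ℝ) (hd : Differentiable ℝ h)
    (x y : EuclideanSpace ℝ (Fin d)) (t : ℝ) :
    HasDerivAt (fun t : ℝ => h (x + t • (y - x))) (⟪gradient h (x + t • (y - x)), y - x⟫) t := by
  have hc : HasDerivAt (fun t : ℝ => x + t • (y - x)) (y - x) t := by
    simpa using ((hasDerivAt_id t).smul_const (y - x)).const_add x
  have hG := (hd (x + t • (y - x))).hasGradientAt
  rw [hasGradientAt_iff_hasFDerivAt] at hG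
  simpa [InnerProductSpace.toDual_apply_apply, Function.comp_def] using hG.comp_hasDerivAt t hc

/-- first-order convexity inequality -/
lemma convex_grad_ineq (h : EuclideanSpace ℝ (Fin d) → ℝ)
    (hd : Differentiable ℝ h) (hc : ConvexOn ℝ Set.univ h)
    (x y : EuclideanSpace ℝ (Fin d)) :
    h x + ⟪gradient h x, y - x⟫ ≤ h y := by
  set φ : ℝ → ℝ := fun t => h (x + t • (y - x)) with hφ
  have hφc : ConvexOn ℝ Set.univ φ := by
    have := hc.comp_affineMap (AffineMap.lineMap x y : ℝ →ᵃ[ℝ] EuclideanSpace ℝ (Fin d))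
    simp only [Set.preimage_univ] at this
    have heq : φ = h ∘ ⇑(AffineMap.lineMap x y) := by
      funext t
      simp only [hφ, Function.comp_apply, AffineMap.lineMap_apply_module]
      congr 1
      module
    rwa [heq]
  have hder := lineHasDerivAt h hd x y 0
  have hslope := hφc.le_slope_of_hasDerivAt (Set.mem_univ 0) (Set.mem_univ 1)
    (by norm_num) (by simpa using hder)
  rw [slope_def_field] at hslope
  have h0 : φ 0 = h x := by simp [hφ]
  have h1 : φ 1 = h y := by simp [hφ]
  simp only [h0, h1] at hslope
  have : ⟪gradient h x, y - x⟫ ≤ h y - h x := by simpa using hslope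
  linarith

/-- descent lemma -/
lemma descent_lemma (h : EuclideanSpace ℝ (Fin d) → ℝ)
    (hd : Differentiable ℝ h) (L : ℝ) (hL : 0 < L)
    (hs : ∀ x y : EuclideanSpace ℝ (Fin d), ‖gradient h x - gradient h y‖ ≤ L * ‖x - y‖)
    (x y : EuclideanSpace ℝ (Fin d)) :
    h y ≤ h x + ⟪gradient h x, y - x⟫ + L / 2 * ‖y - x‖ ^ 2 := by
  set c : ℝ → EuclideanSpace ℝ (Fin d) := fun t => x + t • (y - x) with hcdef
  set ψ : ℝ → ℝ := fun t =>
    h (c t) - t * ⟪gradient h x, y - x⟫ - L / 2 * ‖y - x‖ ^ 2 * t ^ 2 with hψ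
  have hψder : ∀ t : ℝ, HasDerivAt ψ
      (⟪gradient h (c t), y - x⟫ - ⟪gradient h x, y - x⟫ - L * ‖y - x‖ ^ 2 * t) t := by
    intro t
    have h1 := lineHasDerivAt h hd x y t
    have h2 : HasDerivAt (fun t : ℝ => t * ⟪gradient h x, y - x⟫) ⟪gradient h x, y - x⟫ t := by
      simpa using (hasDerivAt_id t).mul_const ⟪gradient h x, y - x⟫
    have h3 : HasDerivAt (fun t : ℝ => L / 2 * ‖y - x‖ ^ 2 * t ^ 2)
        (L * ‖y - x‖ ^ 2 * t) t := by
      have := (hasDerivAt_pow 2 t).const_mul (L / 2 * ‖y - x‖ ^ 2)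
      refine this.congr_deriv ?_
      norm_num
      ring
    exact (h1.sub h2).sub h3
  have hmono : AntitoneOn ψ (Set.Icc 0 1) := by
    apply antitoneOn_of_deriv_nonpos (convex_Icc 0 1)
    · exact fun t _ => ((hψder t).continuousAt).continuousWithinAt
    · exact fun t _ => ((hψder t).differentiableAt).differentiableWithinAt
    · intro t ht
      rw [interior_Icc] at ht
      rw [(hψder t).deriv]
      have hips : ⟪gradient h (c t) - gradient h x, y - x⟫ ≤ L * ‖y - x‖ ^ 2 * t := by
        calc ⟪gradient h (c t) - gradient h x, y - x⟫
            ≤ ‖gradient h (c t) - gradient h x‖ * ‖y - x‖ := real_inner_le_norm _ _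
          _ ≤ L * ‖c t - x‖ * ‖y - x‖ :=
              mul_le_mul_of_nonneg_right (hs (c t) x) (norm_nonneg _)
          _ = L * ‖y - x‖ ^ 2 * t := by
              have hct : c t - x = t • (y - x) := by simp [hcdef]
              rw [hct, norm_smul, Real.norm_eq_abs, abs_of_pos ht.1]; ring
      rw [inner_sub_left] at hips
      linarith
  have h10 := hmono (Set.mem_Icc.2 (by norm_num)) (Set.mem_Icc.2 (by norm_num))
    (by norm_num : (0:ℝ) ≤ 1)
  have hc0 : c 0 = x := by simp [hcdef]
  have hc1 : c 1 = y := by simp [hcdef]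
  have e0 : ψ 0 = h x := by simp [hψ, hc0]
  have e1 : ψ 1 = h y - ⟪gradient h x, y - x⟫ - L / 2 * ‖y - x‖ ^ 2 := by
    simp [hψ, hc1]
  rw [e0, e1] at h10
  linarith

/-- interpolation inequality at a stationary point -/
lemma interp_ineq (h : EuclideanSpace ℝ (Fin d) → ℝ)
    (hd : Differentiable ℝ h) (hc : ConvexOn ℝ Set.univ h) (L : ℝ) (hL : 0 < L)
    (hs : ∀ x y : EuclideanSpace ℝ (Fin d), ‖gradient h x - gradient h y‖ ≤ L * ‖x - y‖)
    (xstar : EuclideanSpace ℝ (Fin d)) (hstar : gradient h xstar = 0)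
    (x : EuclideanSpace ℝ (Fin d)) :
    h x - h xstar + ‖gradient h x‖ ^ 2 / (2 * L) ≤ ⟪gradient h x, x - xstar⟫ := by
  set g0 := gradient h x with hg0
  set w : EuclideanSpace ℝ (Fin d) := xstar + L⁻¹ • g0 with hw
  have h1 : h w ≤ h xstar + ‖g0‖ ^ 2 / (2 * L) := by
    have := descent_lemma h hd L hL hs xstar w
    rw [hstar] at this
    simp only [inner_zero_left] at this
    have hwx : ‖w - xstar‖ ^ 2 = ‖g0‖ ^ 2 / L ^ 2 := by
      have hws : w - xstar = L⁻¹ • g0 := by rw [hw]; abel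
      rw [hws, norm_smul]
      rw [norm_inv, Real.norm_eq_abs, abs_of_pos hL]
      field_simp
    rw [hwx] at this
    calc h w ≤ h xstar + 0 + L / 2 * (‖g0‖ ^ 2 / L ^ 2) := this
      _ = h xstar + ‖g0‖ ^ 2 / (2 * L) := by field_simp; ring
  have h2 : h x + ⟪g0, w - x⟫ ≤ h w := convex_grad_ineq h hd hc x w
  have h3 : ⟪g0, w - x⟫ = ⟪g0, xstar - x⟫ + L⁻¹ * ‖g0‖ ^ 2 := by
    have hws : w - x = (xstar - x) + L⁻¹ • g0 := by rw [hw]; abel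
    rw [hws, inner_add_right, real_inner_smul_right, real_inner_self_eq_norm_sq]
  have h4 : ⟪g0, x - xstar⟫ = -⟪g0, xstar - x⟫ := by
    rw [← inner_neg_right]; congr 1; abel
  rw [h4]
  rw [h3] at h2
  have hL' : L⁻¹ * ‖g0‖ ^ 2 - ‖g0‖ ^ 2 / (2 * L) = ‖g0‖ ^ 2 / (2 * L) := by
    field_simp; ring
  linarith

end analysisAux
section stepAux
variable {d N n : ℕ}

/-- one pathwise step of the averaged momentum scheme -/
lemma pathwise_step
    (f : Fin N → EuclideanSpace ℝ (Fin d) → ℝ)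
    (hdiff : ∀ i, Differentiable ℝ (f i))
    (hconv : ∀ i, ConvexOn ℝ Set.univ (f i))
    (L : ℝ) (hL : 0 < L)
    (hsmooth : ∀ i (x y : EuclideanSpace ℝ (Fin d)),
      ‖gradient (f i) x - gradient (f i) y‖ ≤ L * ‖x - y‖)
    (xstar : EuclideanSpace ℝ (Fin d))
    (hoverparam : ∀ i, gradient (f i) xstar = 0)
    (γmin : ℝ) (hγmin : 0 < γmin)
    (c : ℝ) (hcL : c * L = γmin)
    (s : Fin n → Fin N) (x xp z gg : EuclideanSpace ℝ (Fin d))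
    (hgg : gg = (n : ℝ)⁻¹ • ∑ j, gradient (f (s j)) x)
    (hdivx : γmin * ‖gg‖ ^ 2 ≤ (n : ℝ)⁻¹ * ∑ j, ‖gradient (f (s j)) x‖ ^ 2)
    (t : ℝ) (ht : 0 ≤ t)
    (hzrep : z - xstar = t • (x - xp) + (x - xstar)) :
    ‖(z - c • gg) - xstar‖ ^ 2 ≤ ‖z - xstar‖ ^ 2
      - 2 * c * ((t + 1) * ((n : ℝ)⁻¹ * ∑ j, f (s j) x - (n : ℝ)⁻¹ * ∑ j, f (s j) xstar)
        - t * ((n : ℝ)⁻¹ * ∑ j, f (s j) xp - (n : ℝ)⁻¹ * ∑ j, f (s j) xstar)) := by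
  have hc : 0 < c := by
    rcases lt_trichotomy c 0 with h | h | h
    · nlinarith
    · exfalso; rw [h] at hcL; nlinarith
    · exact h
  have hn0 : (0:ℝ) ≤ (n:ℝ)⁻¹ := by positivity
  have hexp : ‖(z - c • gg) - xstar‖ ^ 2
      = ‖z - xstar‖ ^ 2 - 2 * c * ⟪gg, z - xstar⟫ + c ^ 2 * ‖gg‖ ^ 2 := by
    have h1 : (z - c • gg) - xstar = (z - xstar) - c • gg := by abel
    rw [h1, norm_sub_sq_real, real_inner_smul_right, real_inner_comm]
    have h2 : ‖c • gg‖ ^ 2 = c ^ 2 * ‖gg‖ ^ 2 := by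
      rw [norm_smul, mul_pow, Real.norm_eq_abs, sq_abs]
    rw [h2]; ring
  have hdecomp : ⟪gg, z - xstar⟫ = t * ⟪gg, x - xp⟫ + ⟪gg, x - xstar⟫ := by
    rw [hzrep, inner_add_right, real_inner_smul_right]
  have hinner_sum : ∀ v : EuclideanSpace ℝ (Fin d),
      ⟪gg, v⟫ = (n : ℝ)⁻¹ * ∑ j, ⟪gradient (f (s j)) x, v⟫ := by
    intro v
    rw [hgg, real_inner_smul_left, sum_inner]
  have conv1 : (n : ℝ)⁻¹ * ∑ j, f (s j) x - (n : ℝ)⁻¹ * ∑ j, f (s j) xp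
      ≤ ⟪gg, x - xp⟫ := by
    rw [hinner_sum, ← mul_sub, ← Finset.sum_sub_distrib]
    apply mul_le_mul_of_nonneg_left _ hn0
    apply Finset.sum_le_sum
    intro j _
    have h := convex_grad_ineq (f (s j)) (hdiff _) (hconv _) x xp
    have hneg : ⟪gradient (f (s j)) x, x - xp⟫ = -⟪gradient (f (s j)) x, xp - x⟫ := by
      rw [← inner_neg_right]; congr 1; abel
    rw [hneg]; linarith
  have conv2 : (n : ℝ)⁻¹ * ∑ j, f (s j) x - (n : ℝ)⁻¹ * ∑ j, f (s j) xstar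
      + c / 2 * ‖gg‖ ^ 2 ≤ ⟪gg, x - xstar⟫ := by
    rw [hinner_sum]
    have h1 : ∀ j : Fin n, f (s j) x - f (s j) xstar
        + ‖gradient (f (s j)) x‖ ^ 2 / (2 * L) ≤ ⟪gradient (f (s j)) x, x - xstar⟫ :=
      fun j => interp_ineq _ (hdiff _) (hconv _) L hL (hsmooth _) xstar (hoverparam _) x
    have h2 : (n : ℝ)⁻¹ * ∑ j, (f (s j) x - f (s j) xstar
        + ‖gradient (f (s j)) x‖ ^ 2 / (2 * L))
        ≤ (n : ℝ)⁻¹ * ∑ j, ⟪gradient (f (s j)) x, x - xstar⟫ :=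
      mul_le_mul_of_nonneg_left (Finset.sum_le_sum fun j _ => h1 j) hn0
    have h3 : (n : ℝ)⁻¹ * ∑ j, (f (s j) x - f (s j) xstar
        + ‖gradient (f (s j)) x‖ ^ 2 / (2 * L))
        = ((n : ℝ)⁻¹ * ∑ j, f (s j) x - (n : ℝ)⁻¹ * ∑ j, f (s j) xstar)
          + ((n : ℝ)⁻¹ * ∑ j, ‖gradient (f (s j)) x‖ ^ 2) / (2 * L) := by
      rw [Finset.sum_add_distrib, Finset.sum_sub_distrib, ← Finset.sum_div]
      ring
    rw [h3] at h2
    have h4 : c / 2 * ‖gg‖ ^ 2 ≤ ((n : ℝ)⁻¹ * ∑ j, ‖gradient (f (s j)) x‖ ^ 2) / (2 * L) := by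
      rw [le_div_iff₀ (by positivity)]
      calc c / 2 * ‖gg‖ ^ 2 * (2 * L) = (c * L) * ‖gg‖ ^ 2 := by ring
        _ = γmin * ‖gg‖ ^ 2 := by rw [hcL]
        _ ≤ (n : ℝ)⁻¹ * ∑ j, ‖gradient (f (s j)) x‖ ^ 2 := hdivx
    linarith
  have hsq : c ^ 2 * ‖gg‖ ^ 2 = 2 * c * (c / 2 * ‖gg‖ ^ 2) := by ring
  have P1 := mul_le_mul_of_nonneg_left conv1 (by positivity : (0:ℝ) ≤ 2 * c * t)
  have P2 := mul_le_mul_of_nonneg_left conv2 (by positivity : (0:ℝ) ≤ 2 * c)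
  rw [hexp, hdecomp]
  nlinarith [P1, P2]

end stepAux

section combAux

/-- the average of the minibatch average equals the full average -/
lemma sum_minibatch (N n : ℕ) (hN : 1 ≤ N) (hn : 1 ≤ n) (φ : Fin N → ℝ) :
    ∑ b : Fin n → Fin N, (n : ℝ)⁻¹ * ∑ j, φ (b j)
      = ∑ _b : Fin n → Fin N, (N : ℝ)⁻¹ * ∑ i, φ i := by
  have hcard : ∀ j : Fin n,
      (Fintype.card {j' : Fin n // j' ≠ j} : ℕ) = n - 1 := by
    intro j
    simp [Fintype.card_subtype_compl]
  have hfix : ∀ j : Fin n, ∑ b : Fin n → Fin N, φ (b j)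
      = (N : ℝ) ^ (n - 1) * ∑ i, φ i := by
    intro j
    have h1 : ∑ b : Fin n → Fin N, φ (b j) = ∑ p : Fin N × ({j' : Fin n // j' ≠ j} → Fin N),
        φ p.1 := by
      rw [← Equiv.sum_comp (Equiv.funSplitAt j (Fin N)) (fun p => φ p.1)]
      rfl
    rw [h1, Fintype.sum_prod_type]
    have h2 : ∀ v : Fin N, ∑ _q : {j' : Fin n // j' ≠ j} → Fin N, φ v
        = (N : ℝ) ^ (n - 1) * φ v := by
      intro v
      rw [Finset.sum_const, nsmul_eq_mul]
      congr 1
      rw [Finset.card_univ, Fintype.card_fun, hcard j, Fintype.card_fin]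
      push_cast
      rfl
    rw [Finset.sum_congr rfl (fun v _ => h2 v), ← Finset.mul_sum]
  have hL : ∑ b : Fin n → Fin N, (n : ℝ)⁻¹ * ∑ j, φ (b j)
      = (n : ℝ)⁻¹ * ∑ j : Fin n, ((N : ℝ) ^ (n - 1) * ∑ i, φ i) := by
    rw [← Finset.mul_sum, Finset.sum_comm]
    congr 1
    exact Finset.sum_congr rfl (fun j _ => hfix j)
  have hR : ∑ _b : Fin n → Fin N, (N : ℝ)⁻¹ * ∑ i, φ i
      = ((N : ℝ) ^ n) * ((N : ℝ)⁻¹ * ∑ i, φ i) := by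
    rw [Finset.sum_const, nsmul_eq_mul]
    congr 1
    rw [Finset.card_univ, Fintype.card_fun, Fintype.card_fin, Fintype.card_fin]
    push_cast
    rfl
  rw [hL, hR, Finset.sum_const, nsmul_eq_mul, Finset.card_univ, Fintype.card_fin]
  have hNpow : (N : ℝ) ^ n = (N : ℝ) ^ (n - 1) * N := by
    rw [← pow_succ]
    congr 1
    omega
  have hN0 : (N : ℝ) ≠ 0 := Nat.cast_ne_zero.mpr (by omega)
  have hn0 : (n : ℝ) ≠ 0 := Nat.cast_ne_zero.mpr (by omega)
  rw [hNpow]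
  field_simp

end combAux
/-- replacing the coordinate-`k` integrand by its average, when the rest is independent of
coordinate `k` -/
lemma sum_fiber {ι B γ : Type*} [Fintype ι] [DecidableEq ι] [Fintype B] [Nonempty B]
    (k : ι) (r : (ι → B) → γ)
    (hr : ∀ S S' : ι → B, (∀ i, i ≠ k → S i = S' i) → r S = r S')
    (G H : B → γ → ℝ) (hGH : ∀ y, ∑ b : B, G b y = ∑ b : B, H b y) :
    ∑ S : ι → B, G (S k) (r S) = ∑ S : ι → B, H (S k) (r S) := by
  classical
  have key : ∀ G' : B → γ → ℝ, ∑ S : ι → B, G' (S k) (r S)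
      = ∑ q : {j : ι // j ≠ k} → B, ∑ b : B,
          G' b (r ((Equiv.funSplitAt k B).symm (Classical.arbitrary B, q))) := by
    intro G'
    rw [← Equiv.sum_comp (Equiv.funSplitAt k B).symm
      (fun S => G' (S k) (r S)), Fintype.sum_prod_type, Finset.sum_comm]
    apply Finset.sum_congr rfl
    intro q _
    apply Finset.sum_congr rfl
    intro b _
    have h1 : ((Equiv.funSplitAt k B).symm (b, q)) k = b := by
      simp [Equiv.funSplitAt, Equiv.piSplitAt]
    have h2 : r ((Equiv.funSplitAt k B).symm (b, q))
        = r ((Equiv.funSplitAt k B).symm (Classical.arbitrary B, q)) := by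
      apply hr
      intro i hi
      simp [Equiv.funSplitAt, Equiv.piSplitAt, dif_neg hi]
    rw [h1, h2]
  rw [key G, key H]
  exact Finset.sum_congr rfl fun q _ => hGH _
set_option maxHeartbeats 2000000 in
/-- Theorem 5 (GraD with momentum, in averaged form): under overparameterization,
the averaged/momentum scheme with GraD scaling `γmin` and `η = 1/(2L)` satisfies
`E[f(x^K) - f(x*)] ≤ L‖x¹ - x*‖²/(2 γmin K)`. -/
theorem grad_momentum
    (d N n K : ℕ) (hN : 1 ≤ N) (hn : 1 ≤ n) (hK : 1 ≤ K)
    (f : Fin N → EuclideanSpace ℝ (Fin d) → ℝ)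
    (hdiff : ∀ i, Differentiable ℝ (f i))
    (hconv : ∀ i, ConvexOn ℝ Set.univ (f i))
    (L : ℝ) (hL : 0 < L)
    (hsmooth : ∀ i (x y : EuclideanSpace ℝ (Fin d)),
      ‖gradient (f i) x - gradient (f i) y‖ ≤ L * ‖x - y‖)
    (xstar : EuclideanSpace ℝ (Fin d))
    (hmin : ∀ y, (N : ℝ)⁻¹ * ∑ i, f i xstar ≤ (N : ℝ)⁻¹ * ∑ i, f i y)
    (hoverparam : ∀ i, gradient (f i) xstar = 0)
    (g : (Fin n → Fin N) → EuclideanSpace ℝ (Fin d) → EuclideanSpace ℝ (Fin d))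
    (hg : ∀ s x, g s x = (n : ℝ)⁻¹ • ∑ j, gradient (f (s j)) x)
    (γmin : ℝ) (hγmin : 0 < γmin)
    (hdiv : ∀ (x : EuclideanSpace ℝ (Fin d)) (s : Fin n → Fin N),
      γmin * ‖g s x‖ ^ 2 ≤ (n : ℝ)⁻¹ * ∑ j, ‖gradient (f (s j)) x‖ ^ 2)
    (η : ℝ) (hη : η = 1 / (2 * L))
    (x1 : EuclideanSpace ℝ (Fin d))
    (X Z : (Fin K → Fin n → Fin N) → ℕ → EuclideanSpace ℝ (Fin d))
    (hX1 : ∀ S, X S 1 = x1)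
    (hZ0 : ∀ S, Z S 0 = x1)
    (hZstep : ∀ S (k : Fin K),
      Z S (k.val + 1)
        = Z S k.val - (2 * η * γmin) • g (S k) (X S (k.val + 1)))
    (hXstep : ∀ S (k : Fin K),
      X S (k.val + 2)
        = (((k.val : ℝ) + 1) / ((k.val : ℝ) + 2)) • X S (k.val + 1)
          + (((k.val : ℝ) + 2))⁻¹ • Z S (k.val + 1)) :
    (((N : ℝ) ^ n) ^ K)⁻¹ * ∑ S : Fin K → Fin n → Fin N,
        ((N : ℝ)⁻¹ * ∑ i, f i (X S K) - (N : ℝ)⁻¹ * ∑ i, f i xstar)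
      ≤ L * ‖x1 - xstar‖ ^ 2 / (2 * γmin * K) := by
  classical
  haveI : Nonempty (Fin N) := ⟨⟨0, by omega⟩⟩
  set c : ℝ := 2 * η * γmin with hcdef
  have hLne : L ≠ 0 := ne_of_gt hL
  have hcL : c * L = γmin := by rw [hcdef, hη]; field_simp
  have hc : 0 < c := by
    rw [hcdef, hη]
    have : 0 < 2 * L := by positivity
    positivity
  -- representation of z in terms of the averaged iterates
  have zrep : ∀ (S : Fin K → Fin n → Fin N) (m : ℕ), m < K →
      Z S m = ((m : ℝ) + 1) • X S (m + 1) - (m : ℝ) • X S m := by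
    intro S m hm
    match m with
    | 0 =>
      rw [hZ0 S, hX1 S]
      push_cast
      module
    | (j+1) =>
      have hj : j < K := by omega
      have hx : X S (j + 2)
          = (((j : ℝ) + 1) / ((j : ℝ) + 2)) • X S (j + 1)
            + (((j : ℝ) + 2))⁻¹ • Z S (j + 1) := hXstep S ⟨j, hj⟩
      have h2 : ((j : ℝ) + 2) ≠ 0 := by positivity
      show Z S (j + 1) = (((j + 1 : ℕ) : ℝ) + 1) • X S (j + 2) - ((j + 1 : ℕ) : ℝ) • X S (j + 1)
      rw [hx]
      push_cast
      match_scalars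
      · field_simp
        ring
      · field_simp
        ring
  -- the iterates only depend on the minibatches already used
  have DEP : ∀ (m : ℕ), m ≤ K → ∀ S S' : (Fin K → Fin n → Fin N),
      (∀ i : Fin K, (i : ℕ) < m → S i = S' i) →
      Z S m = Z S' m ∧ X S (m + 1) = X S' (m + 1) := by
    intro m
    induction m with
    | zero =>
      intro _ S S' _
      rw [hZ0 S, hZ0 S', hX1 S, hX1 S']
      exact ⟨rfl, rfl⟩
    | succ m ih =>
      intro hm S S' hag
      have hmK : m < K := hm
      obtain ⟨hZe, hXe⟩ := ih (le_of_lt hmK) S S' (fun i hi => hag i (by omega))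
      have hk : S ⟨m, hmK⟩ = S' ⟨m, hmK⟩ := hag ⟨m, hmK⟩ (Nat.lt_succ_self m)
      have hZs : Z S (m + 1) = Z S m - c • g (S ⟨m, hmK⟩) (X S (m + 1)) := hZstep S ⟨m, hmK⟩
      have hZs' : Z S' (m + 1) = Z S' m - c • g (S' ⟨m, hmK⟩) (X S' (m + 1)) := hZstep S' ⟨m, hmK⟩
      have hZeq : Z S (m + 1) = Z S' (m + 1) := by rw [hZs, hZs', hZe, hXe, hk]
      refine ⟨hZeq, ?_⟩
      have hXs : X S (m + 2)
          = (((m : ℝ) + 1) / ((m : ℝ) + 2)) • X S (m + 1)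
            + (((m : ℝ) + 2))⁻¹ • Z S (m + 1) := hXstep S ⟨m, hmK⟩
      have hXs' : X S' (m + 2)
          = (((m : ℝ) + 1) / ((m : ℝ) + 2)) • X S' (m + 1)
            + (((m : ℝ) + 2))⁻¹ • Z S' (m + 1) := hXstep S' ⟨m, hmK⟩
      show X S (m + 2) = X S' (m + 2)
      rw [hXs, hXs', hXe, hZeq]
  -- the pathwise one-step inequality
  have step : ∀ (S : Fin K → Fin n → Fin N) (k : Fin K),
      ‖Z S (k.val + 1) - xstar‖ ^ 2 ≤ ‖Z S k.val - xstar‖ ^ 2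
        - 2 * c * (((k.val : ℝ) + 1)
            * ((n : ℝ)⁻¹ * ∑ j, f (S k j) (X S (k.val + 1))
                - (n : ℝ)⁻¹ * ∑ j, f (S k j) xstar)
          - (k.val : ℝ)
            * ((n : ℝ)⁻¹ * ∑ j, f (S k j) (X S k.val)
                - (n : ℝ)⁻¹ * ∑ j, f (S k j) xstar)) := by
    intro S k
    have hz : Z S (k.val + 1) = Z S k.val - c • g (S k) (X S (k.val + 1)) := hZstep S k
    have hrep : Z S k.val - xstar
        = (k.val : ℝ) • (X S (k.val + 1) - X S k.val) + (X S (k.val + 1) - xstar) := by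
      rw [zrep S k.val k.isLt]
      module
    rw [hz]
    exact pathwise_step f hdiff hconv L hL hsmooth xstar hoverparam γmin hγmin c hcL
      (S k) (X S (k.val + 1)) (X S k.val) (Z S k.val) (g (S k) (X S (k.val + 1)))
      (hg _ _) (hdiv _ _) (k.val : ℝ) (by positivity) hrep
  -- averaging over the minibatch used at step k
  have EXP : ∀ (k : Fin K) (m : ℕ), 1 ≤ m → m ≤ k.val + 1 →
      ∑ S : Fin K → Fin n → Fin N, (n : ℝ)⁻¹ * ∑ j, f (S k j) (X S m)
        = ∑ S : Fin K → Fin n → Fin N, (N : ℝ)⁻¹ * ∑ i, f i (X S m) := by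
    intro k m hm1 hm2
    have hr : ∀ S S' : Fin K → Fin n → Fin N,
        (∀ i, i ≠ k → S i = S' i) → X S m = X S' m := by
      intro S S' hagree
      have hmm : m - 1 ≤ K := by omega
      have hdep := (DEP (m - 1) hmm S S' ?_).2
      · have hm' : m - 1 + 1 = m := by omega
        rwa [hm'] at hdep
      · intro i hi
        apply hagree
        have hik : (i : ℕ) < (k : ℕ) := by omega
        exact Fin.ne_of_val_ne (Nat.ne_of_lt hik)
    exact sum_fiber k (fun S => X S m) hr
      (fun b y => (n : ℝ)⁻¹ * ∑ j, f (b j) y)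
      (fun _ y => (N : ℝ)⁻¹ * ∑ i, f i y)
      (fun y => sum_minibatch N n hN hn (fun i => f i y))
  have EXPC : ∀ k : Fin K,
      ∑ S : Fin K → Fin n → Fin N, (n : ℝ)⁻¹ * ∑ j, f (S k j) xstar
        = ∑ S : Fin K → Fin n → Fin N, (N : ℝ)⁻¹ * ∑ i, f i xstar := by
    intro k
    exact sum_fiber k (fun _ : Fin K → Fin n → Fin N => xstar) (fun _ _ _ => rfl)
      (fun b y => (n : ℝ)⁻¹ * ∑ j, f (b j) y)
      (fun _ y => (N : ℝ)⁻¹ * ∑ i, f i y)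
      (fun y => sum_minibatch N n hN hn (fun i => f i y))
  -- telescoping
  have tel : ∀ m : ℕ, m ≤ K →
      (∑ S : Fin K → Fin n → Fin N, ‖Z S m - xstar‖ ^ 2)
        + 2 * c * (m : ℝ) * (∑ S : Fin K → Fin n → Fin N,
            ((N : ℝ)⁻¹ * ∑ i, f i (X S m) - (N : ℝ)⁻¹ * ∑ i, f i xstar))
      ≤ ∑ S : Fin K → Fin n → Fin N, ‖Z S 0 - xstar‖ ^ 2 := by
    intro m
    induction m with
    | zero => intro _; norm_num
    | succ m ih =>
      intro hm
      have hmK : m < K := hm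
      have stepm : ∀ S : Fin K → Fin n → Fin N,
          ‖Z S (m + 1) - xstar‖ ^ 2 ≤ ‖Z S m - xstar‖ ^ 2
            - 2 * c * (((m : ℝ) + 1)
                * ((n : ℝ)⁻¹ * ∑ j, f (S ⟨m, hmK⟩ j) (X S (m + 1))
                    - (n : ℝ)⁻¹ * ∑ j, f (S ⟨m, hmK⟩ j) xstar)
              - (m : ℝ)
                * ((n : ℝ)⁻¹ * ∑ j, f (S ⟨m, hmK⟩ j) (X S m)
                    - (n : ℝ)⁻¹ * ∑ j, f (S ⟨m, hmK⟩ j) xstar)) :=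
        fun S => step S ⟨m, hmK⟩
      have hsum := Finset.sum_le_sum (fun S (_ : S ∈ Finset.univ) => stepm S)
      have hA : ∑ S : Fin K → Fin n → Fin N, (‖Z S m - xstar‖ ^ 2
            - 2 * c * (((m : ℝ) + 1)
                * ((n : ℝ)⁻¹ * ∑ j, f (S ⟨m, hmK⟩ j) (X S (m + 1))
                    - (n : ℝ)⁻¹ * ∑ j, f (S ⟨m, hmK⟩ j) xstar)
              - (m : ℝ)
                * ((n : ℝ)⁻¹ * ∑ j, f (S ⟨m, hmK⟩ j) (X S m)
                    - (n : ℝ)⁻¹ * ∑ j, f (S ⟨m, hmK⟩ j) xstar)))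
          = (∑ S : Fin K → Fin n → Fin N, ‖Z S m - xstar‖ ^ 2)
            - 2 * c * (((m : ℝ) + 1)
                * (∑ S : Fin K → Fin n → Fin N,
                    ((n : ℝ)⁻¹ * ∑ j, f (S ⟨m, hmK⟩ j) (X S (m + 1))
                      - (n : ℝ)⁻¹ * ∑ j, f (S ⟨m, hmK⟩ j) xstar))
              - (m : ℝ)
                * (∑ S : Fin K → Fin n → Fin N,
                    ((n : ℝ)⁻¹ * ∑ j, f (S ⟨m, hmK⟩ j) (X S m)
                      - (n : ℝ)⁻¹ * ∑ j, f (S ⟨m, hmK⟩ j) xstar))) := by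
        rw [Finset.sum_sub_distrib]
        congr 1
        rw [← Finset.mul_sum]
        congr 1
        rw [Finset.sum_sub_distrib, ← Finset.mul_sum, ← Finset.mul_sum]
      have hB : ∑ S : Fin K → Fin n → Fin N,
            ((n : ℝ)⁻¹ * ∑ j, f (S ⟨m, hmK⟩ j) (X S (m + 1))
              - (n : ℝ)⁻¹ * ∑ j, f (S ⟨m, hmK⟩ j) xstar)
          = ∑ S : Fin K → Fin n → Fin N,
            ((N : ℝ)⁻¹ * ∑ i, f i (X S (m + 1)) - (N : ℝ)⁻¹ * ∑ i, f i xstar) := by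
        rw [Finset.sum_sub_distrib, Finset.sum_sub_distrib,
          EXP ⟨m, hmK⟩ (m + 1) (by omega) (Nat.le_refl _), EXPC ⟨m, hmK⟩]
      have hC : (m : ℝ) * ∑ S : Fin K → Fin n → Fin N,
            ((n : ℝ)⁻¹ * ∑ j, f (S ⟨m, hmK⟩ j) (X S m)
              - (n : ℝ)⁻¹ * ∑ j, f (S ⟨m, hmK⟩ j) xstar)
          = (m : ℝ) * ∑ S : Fin K → Fin n → Fin N,
            ((N : ℝ)⁻¹ * ∑ i, f i (X S m) - (N : ℝ)⁻¹ * ∑ i, f i xstar) := by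
        rcases Nat.eq_zero_or_pos m with hm0 | hm0
        · subst hm0; norm_num
        · rw [Finset.sum_sub_distrib, Finset.sum_sub_distrib,
            EXP ⟨m, hmK⟩ m hm0 (Nat.le_succ m), EXPC ⟨m, hmK⟩]
      rw [hA, hB] at hsum
      have ihm := ih (by omega)
      push_cast
      nlinarith [hsum, ihm, hC]
  -- conclude
  have htelK := tel K (le_refl K)
  have hNpos : (0 : ℝ) < (N : ℝ) := by exact_mod_cast Nat.lt_of_lt_of_le Nat.zero_lt_one hN
  have hKpos : (0 : ℝ) < (K : ℝ) := by exact_mod_cast Nat.lt_of_lt_of_le Nat.zero_lt_one hK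
  have hA0 : ∑ S : Fin K → Fin n → Fin N, ‖Z S 0 - xstar‖ ^ 2
      = ((N : ℝ) ^ n) ^ K * ‖x1 - xstar‖ ^ 2 := by
    simp only [hZ0]
    rw [Finset.sum_const, nsmul_eq_mul, Finset.card_univ, Fintype.card_fun,
      Fintype.card_fun, Fintype.card_fin, Fintype.card_fin, Fintype.card_fin]
    push_cast
    ring
  have hAK : 0 ≤ ∑ S : Fin K → Fin n → Fin N, ‖Z S K - xstar‖ ^ 2 :=
    Finset.sum_nonneg fun S _ => by positivity
  rw [hA0] at htelK
  have hCpos : 0 < ((N : ℝ) ^ n) ^ K := by positivity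
  have h1 : ∑ S : Fin K → Fin n → Fin N,
        ((N : ℝ)⁻¹ * ∑ i, f i (X S K) - (N : ℝ)⁻¹ * ∑ i, f i xstar)
      ≤ ((N : ℝ) ^ n) ^ K * ‖x1 - xstar‖ ^ 2 / (2 * c * (K : ℝ)) := by
    rw [le_div_iff₀ (by positivity)]
    nlinarith [htelK, hAK]
  have h2 := mul_le_mul_of_nonneg_left h1 (le_of_lt (inv_pos.mpr hCpos))
  have h3 : (((N : ℝ) ^ n) ^ K)⁻¹ * (((N : ℝ) ^ n) ^ K * ‖x1 - xstar‖ ^ 2 / (2 * c * (K : ℝ)))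
      = L * ‖x1 - xstar‖ ^ 2 / (2 * γmin * (K : ℝ)) := by
    rw [← hcL]
    field_simp
  rw [h3] at h2
  exact h2
end

section
/- (Lyapunov one-step decrease in the proof of Theorem 5.) Assume each f_i is convex and L-smooth (L > 0), x* is a minimizer of f with ∇f_i(x*) = 0 for all i, and γmin > 0 satisfies γmin·‖ḡ_s(x)‖² ≤ (1/n)·∑_j ‖∇f_{s(j)}(x)‖² for every x ∈ E and every minibatch s. Set η = 1/(2L). Let k ∈ ℕ and let x_prev, x_cur ∈ E, and set z = (k+1)·x_cur − k·x_prev. Then the average over all N^n minibatches s of ‖z − 2·η·γmin·ḡ_s(x_cur) − x*‖², plus 4·η·γmin·(k+1)·(f(x_cur) − f(x*)), is at most ‖z − x*‖² + 4·η·γmin·k·(f(x_prev) − f(x*)). -/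
open scoped BigOperators RealInnerProductSpace

variable {E : Type*} [NormedAddCommGroup E] [InnerProductSpace ℝ E] [CompleteSpace E]

lemma aux_lineDeriv (h : E → ℝ) (hd : Differentiable ℝ h) (p v : E) (t : ℝ) :
    HasDerivAt (fun s : ℝ => h (p + s • v)) ⟪gradient h (p + t • v), v⟫ t := by
  have hc : HasDerivAt (fun s : ℝ => p + s • v) v t := by
    simpa using ((hasDerivAt_id t).smul_const v).const_add p
  have hg : HasFDerivAt h (InnerProductSpace.toDual ℝ E (gradient h (p + t • v))) (p + t • v) :=
    hasGradientAt_iff_hasFDerivAt.mp (hd (p + t • v)).hasGradientAt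
  exact hg.comp_hasDerivAt t hc

lemma aux_convex_grad_le (h : E → ℝ) (hd : Differentiable ℝ h)
    (hc : ConvexOn ℝ Set.univ h) (a b : E) :
    h a + ⟪gradient h a, b - a⟫ ≤ h b := by
  have hφc : ConvexOn ℝ Set.univ (fun t : ℝ => h (a + t • (b - a))) := by
    have h2 := hc.comp_affineMap (AffineMap.lineMap a b)
    have he : (fun t : ℝ => h (a + t • (b - a))) = h ∘ (AffineMap.lineMap a b) := by
      funext t
      simp only [Function.comp_apply, AffineMap.lineMap_apply_module]
      congr 1
      module
    rw [he]
    simpa using h2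
  have hder := aux_lineDeriv h hd a (b - a) 0
  rw [zero_smul, add_zero] at hder
  have hs := ConvexOn.le_slope_of_hasDerivAt hφc (Set.mem_univ 0) (Set.mem_univ 1)
    one_pos hder
  rw [slope_def_field] at hs
  simp at hs
  have e : ⟪gradient h a, b - a⟫ = fderiv ℝ h a b - fderiv ℝ h a a := by
    rw [gradient, InnerProductSpace.toDual_symm_apply, map_sub]
  linarith

lemma aux_descent (h : E → ℝ) (hd : Differentiable ℝ h) (L : ℝ) (hL : 0 < L)
    (hlip : ∀ x y, ‖gradient h x - gradient h y‖ ≤ L * ‖x - y‖) (a b : E) :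
    h b ≤ h a + ⟪gradient h a, b - a⟫ + L / 2 * ‖b - a‖ ^ 2 := by
  set v := b - a with hv
  set ψ : ℝ → ℝ := fun t => h (a + t • v) - t * ⟪gradient h a, v⟫ - L * t ^ 2 / 2 * ‖v‖ ^ 2
    with hψ
  have hψd : ∀ t : ℝ, HasDerivAt ψ
      (⟪gradient h (a + t • v), v⟫ - ⟪gradient h a, v⟫ - L * t * ‖v‖ ^ 2) t := by
    intro t
    have h1 := aux_lineDeriv h hd a v t
    have h2 : HasDerivAt (fun t : ℝ => t * ⟪gradient h a, v⟫) ⟪gradient h a, v⟫ t := by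
      simpa using (hasDerivAt_id t).mul_const ⟪gradient h a, v⟫
    have h4 : HasDerivAt (fun t : ℝ => t ^ 2) (2 * t) t := by simpa using hasDerivAt_pow 2 t
    have h3 : HasDerivAt (fun t : ℝ => L * t ^ 2 / 2 * ‖v‖ ^ 2) (L * t * ‖v‖ ^ 2) t := by
      have h5 := ((h4.const_mul L).div_const 2).mul_const (‖v‖ ^ 2)
      rw [show L * t * ‖v‖ ^ 2 = L * (2 * t) / 2 * ‖v‖ ^ 2 by ring]
      exact h5
    exact (h1.sub h2).sub h3
  have hanti : AntitoneOn ψ (Set.Icc 0 1) := by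
    apply antitoneOn_of_deriv_nonpos (convex_Icc 0 1)
    · exact (continuous_iff_continuousAt.mpr fun t => (hψd t).continuousAt).continuousOn
    · intro t _
      exact (hψd t).differentiableAt.differentiableWithinAt
    · intro t ht
      rw [interior_Icc] at ht
      rw [(hψd t).deriv]
      have hi : ⟪gradient h (a + t • v) - gradient h a, v⟫ ≤ L * t * ‖v‖ ^ 2 := by
        calc ⟪gradient h (a + t • v) - gradient h a, v⟫
            ≤ ‖gradient h (a + t • v) - gradient h a‖ * ‖v‖ := real_inner_le_norm _ _
          _ ≤ (L * ‖(a + t • v) - a‖) * ‖v‖ :=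
              mul_le_mul_of_nonneg_right (hlip _ _) (norm_nonneg _)
          _ = L * t * ‖v‖ ^ 2 := by
              rw [add_sub_cancel_left, norm_smul, Real.norm_eq_abs, abs_of_pos ht.1]
              ring
      rw [inner_sub_left] at hi
      linarith
  have h01 : ψ 1 ≤ ψ 0 := hanti (Set.left_mem_Icc.mpr zero_le_one)
    (Set.right_mem_Icc.mpr zero_le_one) zero_le_one
  have hab : a + (1 : ℝ) • v = b := by rw [hv]; simp
  simp only [hψ, hab, zero_smul, add_zero, zero_mul, zero_pow, mul_zero, sub_zero,
    one_pow, mul_one, zero_div] at h01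
  linarith [h01]

lemma aux_key (h : E → ℝ) (hd : Differentiable ℝ h) (hc : ConvexOn ℝ Set.univ h)
    (L : ℝ) (hL : 0 < L) (hlip : ∀ x y, ‖gradient h x - gradient h y‖ ≤ L * ‖x - y‖)
    (xs : E) (h0 : gradient h xs = 0) (x : E) :
    h x - h xs + 1 / (2 * L) * ‖gradient h x‖ ^ 2 ≤ ⟪gradient h x, x - xs⟫ := by
  set w := xs + (1 / L) • gradient h x with hw
  have h1 := aux_convex_grad_le h hd hc x w
  have h2 := aux_descent h hd L hL hlip xs w
  rw [h0] at h2
  simp only [inner_zero_left, add_zero] at h2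
  have hw1 : w - xs = (1 / L) • gradient h x := by rw [hw]; abel
  have h3 : ‖w - xs‖ ^ 2 = (1 / L) ^ 2 * ‖gradient h x‖ ^ 2 := by
    rw [hw1, norm_smul, Real.norm_eq_abs, abs_of_pos (by positivity : (0:ℝ) < 1 / L)]
    ring
  have h4 : ⟪gradient h x, w - x⟫
      = ⟪gradient h x, xs - x⟫ + (1 / L) * ‖gradient h x‖ ^ 2 := by
    have hwx : w - x = (xs - x) + (1 / L) • gradient h x := by rw [hw]; abel
    rw [hwx, inner_add_right, real_inner_smul_right, real_inner_self_eq_norm_sq]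
  have h5 : ⟪gradient h x, xs - x⟫ = - ⟪gradient h x, x - xs⟫ := by
    rw [← inner_neg_right]; congr 1; abel
  rw [h4, h5] at h1
  rw [h3] at h2
  have heq : L / 2 * ((1 / L) ^ 2 * ‖gradient h x‖ ^ 2) + 1 / (2 * L) * ‖gradient h x‖ ^ 2
      = (1 / L) * ‖gradient h x‖ ^ 2 := by
    field_simp
    ring
  linarith

lemma aux_sum_eval {N n : ℕ} {M : Type*} [AddCommMonoid M] (j : Fin n) (G : Fin N → M) :
    ∑ s : Fin n → Fin N, G (s j) = (N ^ (n - 1)) • ∑ i, G i := by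
  classical
  rw [← (Equiv.funSplitAt j (Fin N)).symm.sum_comp (fun s => G (s j))]
  have hev : ∀ p : Fin N × ({ l : Fin n // l ≠ j } → Fin N),
      ((Equiv.funSplitAt j (Fin N)).symm p) j = p.1 := by
    intro p
    simp [Equiv.funSplitAt, Equiv.piSplitAt]
  simp only [hev]
  rw [Fintype.sum_prod_type]
  have hcard : Fintype.card ({ l : Fin n // l ≠ j } → Fin N) = N ^ (n - 1) := by
    rw [Fintype.card_fun, Fintype.card_fin]
    congr 1
    rw [Fintype.card_subtype_compl, Fintype.card_subtype_eq, Fintype.card_fin]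
  rw [Finset.smul_sum]
  refine Finset.sum_congr rfl fun a _ => ?_
  simp only []
  rw [Finset.sum_const, Finset.card_univ, hcard]

lemma aux_avg_tuple {N n : ℕ} {M : Type*} [AddCommGroup M] [Module ℝ M]
    (hn : 1 ≤ n) (hN : 1 ≤ N) (G : Fin N → M) :
    (((N : ℝ)) ^ n)⁻¹ • ∑ s : Fin n → Fin N, (n : ℝ)⁻¹ • ∑ j, G (s j)
      = (N : ℝ)⁻¹ • ∑ i, G i := by
  have hNr : (0 : ℝ) < (N : ℝ) := by exact_mod_cast Nat.lt_of_lt_of_le Nat.zero_lt_one hN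
  have hnr : (0 : ℝ) < (n : ℝ) := by exact_mod_cast hn
  have h1 : ∑ s : Fin n → Fin N, (n : ℝ)⁻¹ • ∑ j, G (s j)
      = (n : ℝ)⁻¹ • ∑ j : Fin n, ∑ s : Fin n → Fin N, G (s j) := by
    rw [← Finset.smul_sum, Finset.sum_comm]
  rw [h1]
  have h2 : ∑ j : Fin n, ∑ s : Fin n → Fin N, G (s j)
      = ((n * N ^ (n - 1) : ℕ)) • ∑ i, G i := by
    simp only [aux_sum_eval]
    rw [Finset.sum_const, Finset.card_univ, Fintype.card_fin, smul_smul]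
  rw [h2, ← Nat.cast_smul_eq_nsmul ℝ, smul_smul, smul_smul]
  congr 1
  push_cast
  have hNpow : ((N : ℝ)) ^ n = (N : ℝ) ^ (n - 1) * (N : ℝ) := by
    rw [← pow_succ]
    congr 1
    omega
  rw [hNpow]
  field_simp

/-- Lyapunov one-step decrease in the proof of Theorem 5. -/
theorem grad_momentum_lyapunov_step
    (d N n : ℕ) (hN : 1 ≤ N) (hn : 1 ≤ n)
    (f : Fin N → EuclideanSpace ℝ (Fin d) → ℝ)
    (hdiff : ∀ i, Differentiable ℝ (f i))
    (hconv : ∀ i, ConvexOn ℝ Set.univ (f i))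
    (L : ℝ) (hL : 0 < L)
    (hsmooth : ∀ i (x y : EuclideanSpace ℝ (Fin d)),
      ‖gradient (f i) x - gradient (f i) y‖ ≤ L * ‖x - y‖)
    (xstar : EuclideanSpace ℝ (Fin d))
    (hmin : ∀ y, (N : ℝ)⁻¹ * ∑ i, f i xstar ≤ (N : ℝ)⁻¹ * ∑ i, f i y)
    (hoverparam : ∀ i, gradient (f i) xstar = 0)
    (g : (Fin n → Fin N) → EuclideanSpace ℝ (Fin d) → EuclideanSpace ℝ (Fin d))
    (hg : ∀ s x, g s x = (n : ℝ)⁻¹ • ∑ j, gradient (f (s j)) x)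
    (γmin : ℝ) (hγmin : 0 < γmin)
    (hdiv : ∀ (x : EuclideanSpace ℝ (Fin d)) (s : Fin n → Fin N),
      γmin * ‖g s x‖ ^ 2 ≤ (n : ℝ)⁻¹ * ∑ j, ‖gradient (f (s j)) x‖ ^ 2)
    (η : ℝ) (hη : η = 1 / (2 * L))
    (k : ℕ) (xprev xcur z : EuclideanSpace ℝ (Fin d))
    (hz : z = ((k : ℝ) + 1) • xcur - (k : ℝ) • xprev) :
    ((N : ℝ) ^ n)⁻¹ * ∑ s : Fin n → Fin N,
        ‖z - (2 * η * γmin) • g s xcur - xstar‖ ^ 2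
      + 4 * η * γmin * ((k : ℝ) + 1)
          * ((N : ℝ)⁻¹ * ∑ i, f i xcur - (N : ℝ)⁻¹ * ∑ i, f i xstar)
      ≤ ‖z - xstar‖ ^ 2
        + 4 * η * γmin * (k : ℝ)
            * ((N : ℝ)⁻¹ * ∑ i, f i xprev - (N : ℝ)⁻¹ * ∑ i, f i xstar) := by
  classical
  have hNr : (0 : ℝ) < (N : ℝ) := by exact_mod_cast Nat.lt_of_lt_of_le Nat.zero_lt_one hN
  have hnr : (0 : ℝ) < (n : ℝ) := by exact_mod_cast hn
  set c : ℝ := 2 * η * γmin with hc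
  have hcpos : 0 < c := by rw [hc, hη]; positivity
  have hcL : c * L = γmin := by rw [hc, hη]; field_simp
  set W : EuclideanSpace ℝ (Fin d) := ∑ i, gradient (f i) xcur with hW
  set M : ℝ := (N : ℝ)⁻¹ with hM
  set S1 : ℝ := ∑ i, f i xcur with hS1
  set S0 : ℝ := ∑ i, f i xstar with hS0
  set Sp : ℝ := ∑ i, f i xprev with hSp
  set Gs : ℝ := ∑ i, ‖gradient (f i) xcur‖ ^ 2 with hGs
  set X : ℝ := ((N : ℝ) ^ n)⁻¹ * ∑ s : Fin n → Fin N, ‖g s xcur‖ ^ 2 with hX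
  -- averaged gradient
  have hEg : ((N : ℝ) ^ n)⁻¹ • ∑ s : Fin n → Fin N, g s xcur = M • W := by
    have h := aux_avg_tuple hn hN (fun i => gradient (f i) xcur)
    simp only [hg]
    exact h
  have hEg' : ((N : ℝ) ^ n)⁻¹ * ⟪z - xstar, ∑ s : Fin n → Fin N, g s xcur⟫
      = M * ⟪z - xstar, W⟫ := by
    rw [← real_inner_smul_right, hEg, real_inner_smul_right]
  -- expansion of the expected squared norm
  have hper : ∀ s : Fin n → Fin N, ‖z - c • g s xcur - xstar‖ ^ 2
      = ‖z - xstar‖ ^ 2 - 2 * c * ⟪z - xstar, g s xcur⟫ + c ^ 2 * ‖g s xcur‖ ^ 2 := by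
    intro s
    have h0 : z - c • g s xcur - xstar = (z - xstar) - c • g s xcur := by abel
    rw [h0, norm_sub_sq_real, real_inner_smul_right, norm_smul, Real.norm_eq_abs, mul_pow,
      sq_abs]
    ring
  have hcard : (Fintype.card (Fin n → Fin N) : ℝ) = (N : ℝ) ^ n := by
    rw [Fintype.card_fun, Fintype.card_fin, Fintype.card_fin]
    push_cast
    rfl
  have hA : ((N : ℝ) ^ n)⁻¹ * ∑ s : Fin n → Fin N, ‖z - c • g s xcur - xstar‖ ^ 2
      = ‖z - xstar‖ ^ 2 - 2 * c * (M * ⟪z - xstar, W⟫) + c ^ 2 * X := by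
    have hsum : ∑ s : Fin n → Fin N, ‖z - c • g s xcur - xstar‖ ^ 2
        = ((N : ℝ) ^ n) * ‖z - xstar‖ ^ 2
          - 2 * c * ⟪z - xstar, ∑ s : Fin n → Fin N, g s xcur⟫
          + c ^ 2 * ∑ s : Fin n → Fin N, ‖g s xcur‖ ^ 2 := by
      simp only [hper]
      rw [Finset.sum_add_distrib, Finset.sum_sub_distrib, Finset.sum_const, Finset.card_univ,
        inner_sum, Finset.mul_sum, Finset.mul_sum]
      rw [nsmul_eq_mul, hcard]
    rw [hsum]
    have hNn : ((N : ℝ) ^ n) ≠ 0 := by positivity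
    rw [mul_add, mul_sub, ← hEg']
    rw [hX]
    field_simp
  -- bound on the second moment
  have hGsavg : ((N : ℝ) ^ n)⁻¹ * ∑ s : Fin n → Fin N,
      ((n : ℝ)⁻¹ * ∑ j, ‖gradient (f (s j)) xcur‖ ^ 2) = M * Gs := by
    have h := aux_avg_tuple (M := ℝ) hn hN (fun i => ‖gradient (f i) xcur‖ ^ 2)
    simpa [smul_eq_mul] using h
  have hXle : X ≤ γmin⁻¹ * (M * Gs) := by
    rw [← hGsavg, hX]
    have hs : ∑ s : Fin n → Fin N, ‖g s xcur‖ ^ 2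
        ≤ ∑ s : Fin n → Fin N,
            γmin⁻¹ * ((n : ℝ)⁻¹ * ∑ j, ‖gradient (f (s j)) xcur‖ ^ 2) := by
      refine Finset.sum_le_sum fun s _ => ?_
      have h := hdiv xcur s
      calc ‖g s xcur‖ ^ 2 = γmin⁻¹ * (γmin * ‖g s xcur‖ ^ 2) := by field_simp
        _ ≤ γmin⁻¹ * ((n : ℝ)⁻¹ * ∑ j, ‖gradient (f (s j)) xcur‖ ^ 2) :=
            mul_le_mul_of_nonneg_left h (by positivity)
    calc ((N : ℝ) ^ n)⁻¹ * ∑ s : Fin n → Fin N, ‖g s xcur‖ ^ 2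
        ≤ ((N : ℝ) ^ n)⁻¹ * ∑ s : Fin n → Fin N,
            γmin⁻¹ * ((n : ℝ)⁻¹ * ∑ j, ‖gradient (f (s j)) xcur‖ ^ 2) :=
          mul_le_mul_of_nonneg_left hs (by positivity)
      _ = γmin⁻¹ * (((N : ℝ) ^ n)⁻¹ * ∑ s : Fin n → Fin N,
            ((n : ℝ)⁻¹ * ∑ j, ‖gradient (f (s j)) xcur‖ ^ 2)) := by
          rw [← Finset.mul_sum]
          ring
  -- per-function inequalities
  have hP1 : S1 - S0 + 1 / (2 * L) * Gs ≤ ⟪xcur - xstar, W⟫ := by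
    have hsumkey : ∑ i, (f i xcur - f i xstar + 1 / (2 * L) * ‖gradient (f i) xcur‖ ^ 2)
        ≤ ∑ i, ⟪gradient (f i) xcur, xcur - xstar⟫ :=
      Finset.sum_le_sum fun i _ =>
        aux_key (f i) (hdiff i) (hconv i) L hL (hsmooth i) xstar (hoverparam i) xcur
    have hl : ∑ i, (f i xcur - f i xstar + 1 / (2 * L) * ‖gradient (f i) xcur‖ ^ 2)
        = S1 - S0 + 1 / (2 * L) * Gs := by
      rw [Finset.sum_add_distrib, Finset.sum_sub_distrib, ← Finset.mul_sum]
    have hr : ∑ i, ⟪gradient (f i) xcur, xcur - xstar⟫ = ⟪xcur - xstar, W⟫ := by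
      rw [real_inner_comm, hW, sum_inner]
    rw [hl, hr] at hsumkey
    exact hsumkey
  have hP2 : S1 - Sp ≤ ⟪xcur - xprev, W⟫ := by
    have hsc : ∑ i, (f i xcur - f i xprev)
        ≤ ∑ i, ⟪gradient (f i) xcur, xcur - xprev⟫ := by
      refine Finset.sum_le_sum fun i _ => ?_
      have h := aux_convex_grad_le (f i) (hdiff i) (hconv i) xcur xprev
      have h2 : ⟪gradient (f i) xcur, xprev - xcur⟫
          = - ⟪gradient (f i) xcur, xcur - xprev⟫ := by
        rw [← inner_neg_right]; congr 1; abel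
      rw [h2] at h
      linarith
    have hl : ∑ i, (f i xcur - f i xprev) = S1 - Sp := Finset.sum_sub_distrib _ _
    have hr : ∑ i, ⟪gradient (f i) xcur, xcur - xprev⟫ = ⟪xcur - xprev, W⟫ := by
      rw [real_inner_comm, hW, sum_inner]
    rw [hl, hr] at hsc
    exact hsc
  have hPz : ⟪z - xstar, W⟫ = ⟪xcur - xstar, W⟫ + (k : ℝ) * ⟪xcur - xprev, W⟫ := by
    have hzd : z - xstar = (xcur - xstar) + (k : ℝ) • (xcur - xprev) := by
      rw [hz]; module
    rw [hzd, inner_add_left, real_inner_smul_left]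
  -- core scalar inequality
  have hkP2 : (k : ℝ) * (S1 - Sp) ≤ (k : ℝ) * ⟪xcur - xprev, W⟫ :=
    mul_le_mul_of_nonneg_left hP2 (Nat.cast_nonneg k)
  have hcore : 0 ≤ (k : ℝ) * (Sp - S0) - ((k : ℝ) + 1) * (S1 - S0)
      + (⟪xcur - xstar, W⟫ + (k : ℝ) * ⟪xcur - xprev, W⟫) - 1 / (2 * L) * Gs := by
    linarith [hP1, hkP2]
  have hmul : 0 ≤ (2 * c * M) * ((k : ℝ) * (Sp - S0) - ((k : ℝ) + 1) * (S1 - S0)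
      + (⟪xcur - xstar, W⟫ + (k : ℝ) * ⟪xcur - xprev, W⟫) - 1 / (2 * L) * Gs) :=
    mul_nonneg (by positivity) hcore
  have hc2X : c ^ 2 * X ≤ 2 * c * M * (1 / (2 * L) * Gs) := by
    have h1 : c ^ 2 * X ≤ c ^ 2 * (γmin⁻¹ * (M * Gs)) :=
      mul_le_mul_of_nonneg_left hXle (by positivity)
    have h2 : c ^ 2 * (γmin⁻¹ * (M * Gs)) = 2 * c * M * (1 / (2 * L) * Gs) := by
      rw [← hcL]
      field_simp
    linarith
  -- assemble
  rw [show (4 : ℝ) * η * γmin = 2 * c by rw [hc]; ring]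
  rw [hA, hPz]
  linarith [hmul, hc2X]
end
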